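/- Let G' be a graph with an edge vw, and let G'' be obtained from G' by subdividing vw three times (replacing vw with a path v, s₁, s₂, s₃, w on three new vertices). If D'' is an odd-dominating set of G'', then D'' ∩ V(G') is an odd-dominating set of G'. Moreover, either {v, w, s₁, s₂, s₃} ⊆ D'' or |{s₁, s₂, s₃} ∩ D''| = 1. -/
import Mathlib

open SimpleGraph Finset
open scoped Classical

/-- The closed neighborhood `N[v]` of a vertex `v`. -/
def closedNbhd {V : Type*} (G : SimpleGraph V) (v : V) : Set V :=
  insert v (G.neighborSet v)

/-- `D` is an odd-dominating set: `|N[v] ∩ D|` is odd for every vertex `v`. -/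
def OddDomSet {V : Type*} (G : SimpleGraph V) (D : Set V) : Prop :=
  ∀ v, Odd ((closedNbhd G v ∩ D).ncard)

/-- `f` is an odd-sum coloring: a proper coloring with positive integer colors
such that the sum of colors over each closed neighborhood is odd. -/
def IsOddSumColoring {V : Type*} [Fintype V] (G : SimpleGraph V) (f : V → ℕ) : Prop :=
  (∀ v, 0 < f v) ∧ (∀ ⦃a b⦄, G.Adj a b → f a ≠ f b) ∧
  (∀ v, Odd (∑ w ∈ (closedNbhd G v).toFinset, f w))

/-- The odd-sum chromatic number: minimum number of colors used in an odd-sum coloring. -/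
noncomputable def chiOS {V : Type*} [Fintype V] (G : SimpleGraph V) : ℕ :=
  sInf {n | ∃ f : V → ℕ, IsOddSumColoring G f ∧ (Finset.univ.image f).card = n}

/-- The graph obtained from `G` by subdividing the edge `vw` three times:
delete `vw` and add a path `v, s₀, s₁, s₂, w` through three new vertices. -/
def subdiv3 {V : Type*} (G : SimpleGraph V) (v w : V) : SimpleGraph (V ⊕ Fin 3) :=
  SimpleGraph.fromRel (fun a b =>
    match a, b with
    | .inl x, .inl y => G.Adj x y ∧ ¬(x = v ∧ y = w) ∧ ¬(x = w ∧ y = v)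
    | .inl x, .inr i => (x = v ∧ i = 0) ∨ (x = w ∧ i = 2)
    | .inr i, .inr j => i.val + 1 = j.val
    | _, _ => False)

section Helpers

lemma ncard_inter_singleton' {α : Type*} (a : α) (D : Set α) :
    (({a} : Set α) ∩ D).ncard = if a ∈ D then 1 else 0 := by
  split_ifs with h
  · rw [Set.inter_eq_left.mpr (Set.singleton_subset_iff.mpr h), Set.ncard_singleton]
  · rw [Set.singleton_inter_eq_empty.mpr h, Set.ncard_empty]

lemma ncard_insert_inter' {α : Type*} (a : α) (s D : Set α) (ha : a ∉ s) (hs : s.Finite) :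
    ((insert a s) ∩ D).ncard = (if a ∈ D then 1 else 0) + (s ∩ D).ncard := by
  by_cases h : a ∈ D
  · rw [Set.insert_inter_of_mem h, if_pos h,
      Set.ncard_insert_of_notMem (fun hc => ha hc.1) (hs.inter_of_left D)]
    omega
  · rw [Set.insert_inter_of_notMem h, if_neg h, zero_add]

lemma ncard_triple_inter' {α : Type*} (a b c : α) (hab : a ≠ b) (hac : a ≠ c) (hbc : b ≠ c)
    (D : Set α) :
    (({a, b, c} : Set α) ∩ D).ncard =
      (if a ∈ D then 1 else 0) + (if b ∈ D then 1 else 0) + (if c ∈ D then 1 else 0) := by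
  rw [show ({a, b, c} : Set α) = insert a (insert b {c}) from rfl,
    ncard_insert_inter' a _ D (by simp [hab, hac]) ((Set.finite_singleton c).insert b),
    ncard_insert_inter' b _ D (by simp [hbc]) (Set.finite_singleton c),
    ncard_inter_singleton']
  omega

lemma ind_spec (p : Prop) : ∃ n : ℕ, (if p then 1 else 0) = n ∧ (n = 0 ∨ n = 1) ∧ (n = 1 ↔ p) := by
  by_cases h : p
  · exact ⟨1, if_pos h, Or.inr rfl, by simp [h]⟩
  · exact ⟨0, if_neg h, Or.inl rfl, by simp [h]⟩

variable {V : Type*} (G : SimpleGraph V) {v w : V}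

lemma cn_inr0 : closedNbhd (subdiv3 G v w) (Sum.inr 0) = {Sum.inr 0, Sum.inl v, Sum.inr 1} := by
  ext (y | j)
  · simp [closedNbhd, subdiv3, SimpleGraph.fromRel_adj]
  · fin_cases j <;> simp [closedNbhd, subdiv3, SimpleGraph.fromRel_adj]

lemma cn_inr1 : closedNbhd (subdiv3 G v w) (Sum.inr 1) = {Sum.inr 1, Sum.inr 0, Sum.inr 2} := by
  ext (y | j)
  · simp [closedNbhd, subdiv3, SimpleGraph.fromRel_adj]
  · fin_cases j <;> simp [closedNbhd, subdiv3, SimpleGraph.fromRel_adj]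

lemma cn_inr2 : closedNbhd (subdiv3 G v w) (Sum.inr 2) = {Sum.inr 2, Sum.inr 1, Sum.inl w} := by
  ext (y | j)
  · simp [closedNbhd, subdiv3, SimpleGraph.fromRel_adj]
  · fin_cases j <;> simp [closedNbhd, subdiv3, SimpleGraph.fromRel_adj]

lemma cn_v (hvw : v ≠ w) :
    closedNbhd (subdiv3 G v w) (Sum.inl v)
      = Sum.inl '' (closedNbhd G v \ {w}) ∪ {Sum.inr 0} := by
  ext (y | j)
  · simp [closedNbhd, subdiv3, SimpleGraph.fromRel_adj, hvw]
    rcases eq_or_ne y v with rfl | hne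
    · simp [hvw]
    · simp [hne, Ne.symm hne, G.adj_comm]
      try tauto
  · fin_cases j <;> simp [closedNbhd, subdiv3, SimpleGraph.fromRel_adj, hvw]

lemma cn_w (hvw : v ≠ w) :
    closedNbhd (subdiv3 G v w) (Sum.inl w)
      = Sum.inl '' (closedNbhd G w \ {v}) ∪ {Sum.inr 2} := by
  ext (y | j)
  · simp [closedNbhd, subdiv3, SimpleGraph.fromRel_adj, Ne.symm hvw]
    rcases eq_or_ne y w with rfl | hne
    · simp [Ne.symm hvw]
    · simp [hne, Ne.symm hne, G.adj_comm]
      try tauto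
  · fin_cases j <;> simp [closedNbhd, subdiv3, SimpleGraph.fromRel_adj, Ne.symm hvw]

lemma cn_x (x : V) (hxv : x ≠ v) (hxw : x ≠ w) :
    closedNbhd (subdiv3 G v w) (Sum.inl x) = Sum.inl '' (closedNbhd G x) := by
  ext (y | j)
  · simp [closedNbhd, subdiv3, SimpleGraph.fromRel_adj, hxv, hxw]
    rcases eq_or_ne y x with rfl | hne
    · simp
    · simp [hne, Ne.symm hne, G.adj_comm]
      try tauto
  · fin_cases j <;> simp [closedNbhd, subdiv3, SimpleGraph.fromRel_adj, hxv, hxw]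

end Helpers

theorem subdiv3_oddDominating_restrict {V : Type*} [Fintype V]
    (G : SimpleGraph V) (v w : V) (hvw : G.Adj v w)
    (D'' : Set (V ⊕ Fin 3)) (hD'' : OddDomSet (subdiv3 G v w) D'') :
    OddDomSet G {x : V | Sum.inl x ∈ D''} ∧
      (({Sum.inl v, Sum.inl w, Sum.inr 0, Sum.inr 1, Sum.inr 2} : Set (V ⊕ Fin 3)) ⊆ D'' ∨
        ({a : V ⊕ Fin 3 | ∃ i : Fin 3, a = Sum.inr i} ∩ D'').ncard = 1) := by
  have hne : v ≠ w := G.ne_of_adj hvw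
  obtain ⟨a, haeq, ha01, haP⟩ := ind_spec ((Sum.inr 0 : V ⊕ Fin 3) ∈ D'')
  obtain ⟨b, hbeq, hb01, hbP⟩ := ind_spec ((Sum.inr 1 : V ⊕ Fin 3) ∈ D'')
  obtain ⟨c, hceq, hc01, hcP⟩ := ind_spec ((Sum.inr 2 : V ⊕ Fin 3) ∈ D'')
  obtain ⟨p, hpeq, hp01, hpP⟩ := ind_spec ((Sum.inl v : V ⊕ Fin 3) ∈ D'')
  obtain ⟨q, hqeq, hq01, hqP⟩ := ind_spec ((Sum.inl w : V ⊕ Fin 3) ∈ D'')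
  have h0 := hD'' (Sum.inr 0)
  rw [cn_inr0, ncard_triple_inter' _ _ _ (by simp) (by simp) (by simp),
    haeq, hpeq, hbeq, Nat.odd_iff] at h0
  have h1 := hD'' (Sum.inr 1)
  rw [cn_inr1, ncard_triple_inter' _ _ _ (by simp) (by simp) (by simp),
    hbeq, haeq, hceq, Nat.odd_iff] at h1
  have h2 := hD'' (Sum.inr 2)
  rw [cn_inr2, ncard_triple_inter' _ _ _ (by simp) (by simp) (by simp),
    hceq, hbeq, hqeq, Nat.odd_iff] at h2
  have hpre : ({x : V | Sum.inl x ∈ D''} : Set V) = Sum.inl ⁻¹' D'' := rfl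
  constructor
  · intro x
    rw [hpre]
    by_cases hxv : x = v
    · subst hxv
      have key := hD'' (Sum.inl x)
      rw [cn_v G hne, Set.union_inter_distrib_right] at key
      have hdisj : Disjoint (Sum.inl '' (closedNbhd G x \ {w}) ∩ D'')
          (({Sum.inr 0} : Set (V ⊕ Fin 3)) ∩ D'') := by
        rw [Set.disjoint_left]
        rintro z ⟨⟨y, -, rfl⟩, -⟩ ⟨h, -⟩
        simp at h
      rw [Set.ncard_union_eq hdisj (Set.toFinite _) (Set.toFinite _),
        ← Set.image_inter_preimage, Set.ncard_image_of_injective _ Sum.inl_injective,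
        ncard_inter_singleton', haeq, Nat.odd_iff] at key
      have hwm : w ∈ closedNbhd G x :=
        Set.mem_insert_of_mem _ ((G.mem_neighborSet x w).mpr hvw)
      rw [show closedNbhd G x = insert w (closedNbhd G x \ {w}) by
            rw [Set.insert_diff_singleton, Set.insert_eq_self.mpr hwm],
        ncard_insert_inter' _ _ _ (by simp) (Set.toFinite _)]
      simp only [Set.mem_preimage]
      rw [hqeq, Nat.odd_iff]
      omega
    · by_cases hxw : x = w
      · subst hxw
        have key := hD'' (Sum.inl x)
        rw [cn_w G hne, Set.union_inter_distrib_right] at key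
        have hdisj : Disjoint (Sum.inl '' (closedNbhd G x \ {v}) ∩ D'')
            (({Sum.inr 2} : Set (V ⊕ Fin 3)) ∩ D'') := by
          rw [Set.disjoint_left]
          rintro z ⟨⟨y, -, rfl⟩, -⟩ ⟨h, -⟩
          simp at h
        rw [Set.ncard_union_eq hdisj (Set.toFinite _) (Set.toFinite _),
          ← Set.image_inter_preimage, Set.ncard_image_of_injective _ Sum.inl_injective,
          ncard_inter_singleton', hceq, Nat.odd_iff] at key
        have hvm : v ∈ closedNbhd G x :=
          Set.mem_insert_of_mem _ ((G.mem_neighborSet x v).mpr hvw.symm)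
        rw [show closedNbhd G x = insert v (closedNbhd G x \ {v}) by
              rw [Set.insert_diff_singleton, Set.insert_eq_self.mpr hvm],
          ncard_insert_inter' _ _ _ (by simp) (Set.toFinite _)]
        simp only [Set.mem_preimage]
        rw [hpeq, Nat.odd_iff]
        omega
      · have key := hD'' (Sum.inl x)
        rw [cn_x G x hxv hxw, ← Set.image_inter_preimage,
          Set.ncard_image_of_injective _ Sum.inl_injective] at key
        exact key
  · have hset : ({a : V ⊕ Fin 3 | ∃ i : Fin 3, a = Sum.inr i})
        = ({Sum.inr 0, Sum.inr 1, Sum.inr 2} : Set (V ⊕ Fin 3)) := by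
      ext z
      constructor
      · rintro ⟨i, rfl⟩
        fin_cases i <;> simp
      · rintro (rfl | rfl | rfl) <;> exact ⟨_, rfl⟩
    rw [hset, ncard_triple_inter' _ _ _ (by simp) (by simp) (by simp), haeq, hbeq, hceq]
    by_cases hall : a = 1 ∧ b = 1 ∧ c = 1
    · left
      obtain ⟨ha, hb, hc⟩ := hall
      have hp : p = 1 := by rcases hp01 with h | h <;> omega
      have hq : q = 1 := by rcases hq01 with h | h <;> omega
      intro z hz
      simp only [Set.mem_insert_iff, Set.mem_singleton_iff] at hz
      rcases hz with rfl | rfl | rfl | rfl | rfl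
      · exact hpP.mp hp
      · exact hqP.mp hq
      · exact haP.mp ha
      · exact hbP.mp hb
      · exact hcP.mp hc
    · right
      rcases ha01 with rfl | rfl <;> rcases hb01 with rfl | rfl <;> rcases hc01 with rfl | rfl <;>
        first
        | omega
        | exact absurd ⟨rfl, rfl, rfl⟩ hall
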